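/- arXiv:1207.6445 — 13 statements merged into one kernel-verified Lean document; each statement's English description precedes it below -/
import Mathlib

section
/- Let (q, ε, b) be a buyer type with q·(1 − b) ≤ ε, and let 0 ≤ x ≤ (q − ε)/b and 0 ≤ p ≤ b. Then y := q − ε − x·p satisfies y ≥ 0, L(y, x) ≤ ε, and y + x·p = q − ε; in particular the contract (x, p) is acceptable to the buyer. -/
/-- Expected loss of a type-(q, ε, b) buyer purchasing y units of deterministic
service and x units of stochastic service. -/
noncomputable def eLoss (q b y x : ℝ) : ℝ :=
  b * max (q - y - x) 0 + (1 - b) * max (q - y) 0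

/-- A contract (x, p) is acceptable to a type-(q, ε, b) buyer. -/
def acceptable (q ε b x p : ℝ) : Prop :=
  ∃ y, 0 ≤ y ∧ eLoss q b y x ≤ ε ∧ y + x * p ≤ q - ε

/-- The cost of a contract (x, p) to a type-(q, ε, b) buyer. -/
noncomputable def cost (q ε b x p : ℝ) : ℝ :=
  sInf {z | ∃ y, 0 ≤ y ∧ eLoss q b y x ≤ ε ∧ z = y + x * p}

/-- The knee of a type-(q, ε, b) buyer's acceptance region. -/
noncomputable def knee (q ε b : ℝ) : ℝ :=
  min ((q - ε) / b) (ε / (1 - b))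

/-- The equivalent-price function of a type-(q, ε, b) buyer. -/
noncomputable def eqPrice (q ε b x' p' x : ℝ) : ℝ :=
  if x ≤ knee q ε b ∧ x' ≤ knee q ε b then b - (x' / x) * (b - p')
  else if knee q ε b ≤ x ∧ knee q ε b ≤ x' then x' * p' / x
  else if x' < knee q ε b ∧ knee q ε b < x then (b * (knee q ε b - x') + x' * p') / x
  else b - (knee q ε b * b - x' * p') / x

/-- When q·(1 − b) ≤ ε, 0 ≤ x ≤ (q − ε)/b and 0 ≤ p ≤ b, the purchase
y = q − ε − x·p is nonnegative, meets the loss constraint, costs exactly the reserve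
price, and hence the contract (x, p) is acceptable. -/
theorem stmt2 (q ε b x p : ℝ) (hb0 : 0 < b) (hb1 : b < 1) (hε0 : 0 < ε) (hεq : ε < q)
    (hcase : q * (1 - b) ≤ ε) (hx0 : 0 ≤ x) (hx : x ≤ (q - ε) / b)
    (hp0 : 0 ≤ p) (hp : p ≤ b) :
    0 ≤ q - ε - x * p ∧ eLoss q b (q - ε - x * p) x ≤ ε ∧
      (q - ε - x * p) + x * p = q - ε ∧ acceptable q ε b x p := by
  have hxb : x * b ≤ q - ε := by
    rw [div_eq_mul_inv] at hx
    calc x * b ≤ (q - ε) * b⁻¹ * b := by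
          exact mul_le_mul_of_nonneg_right hx hb0.le
      _ = q - ε := by field_simp
  have hxp : x * p ≤ x * b := mul_le_mul_of_nonneg_left hp hx0
  have hy0 : 0 ≤ q - ε - x * p := by linarith
  have hloss : eLoss q b (q - ε - x * p) x ≤ ε := by
    unfold eLoss
    have h1 : q - (q - ε - x * p) = ε + x * p := by ring
    rcases le_or_gt (q - (q - ε - x * p) - x) 0 with h | h
    · rw [max_eq_right h, max_eq_left (by nlinarith : (0:ℝ) ≤ q - (q - ε - x * p))]
      have : (1 - b) * (x * p) ≤ b * ε := by nlinarith
      nlinarith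
    · rw [max_eq_left h.le, max_eq_left (by nlinarith : (0:ℝ) ≤ q - (q - ε - x * p))]
      nlinarith
  refine ⟨hy0, hloss, by ring, ⟨q - ε - x * p, hy0, hloss, by linarith⟩⟩
end

section
/- Let (q, ε, b) be a buyer type with knee x* = min((q − ε)/b, ε/(1 − b)). For every x with 0 ≤ x ≤ x* and every real p, the cost satisfies C(x, p) = (q − ε) − x·(b − p), and the infimum defining C(x, p) is attained at y = q − ε − x·b. -/
/-- For 0 ≤ x ≤ x* and any real p, the cost is
C(x, p) = (q − ε) − x·(b − p), and the infimum is attained at y = q − ε − x·b. -/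
theorem stmt4 (q ε b x p : ℝ) (hb0 : 0 < b) (hb1 : b < 1) (hε0 : 0 < ε) (hεq : ε < q)
    (hx0 : 0 ≤ x) (hx : x ≤ knee q ε b) :
    cost q ε b x p = (q - ε) - x * (b - p) ∧
    0 ≤ q - ε - x * b ∧ eLoss q b (q - ε - x * b) x ≤ ε ∧
    (q - ε - x * b) + x * p = cost q ε b x p := by
  have h1b : 0 < 1 - b := by linarith
  have hx1 : x * b ≤ q - ε := by
    have := hx.trans (min_le_left ((q - ε) / b) (ε / (1 - b)))
    rwa [le_div_iff₀ hb0] at this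
  have hx2 : x * (1 - b) ≤ ε := by
    have := hx.trans (min_le_right ((q - ε) / b) (ε / (1 - b)))
    rwa [le_div_iff₀ h1b] at this
  set y₀ := q - ε - x * b with hy₀
  have hy₀0 : 0 ≤ y₀ := by simp [hy₀]; linarith
  have hL0 : eLoss q b y₀ x ≤ ε := by
    unfold eLoss
    rw [max_eq_left (by simp [hy₀]; nlinarith), max_eq_left (by simp [hy₀]; nlinarith)]
    nlinarith
  have hlb : ∀ y : ℝ, 0 ≤ y → eLoss q b y x ≤ ε → y₀ ≤ y := by
    intro y hy hL
    by_contra hlt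
    push_neg at hlt
    unfold eLoss at hL
    rcases le_or_gt (q - y - x) 0 with h | h
    · rw [max_eq_right h, max_eq_left (by nlinarith)] at hL
      nlinarith
    · rw [max_eq_left h.le, max_eq_left (by nlinarith)] at hL
      nlinarith
  have hleast : IsLeast {z | ∃ y, 0 ≤ y ∧ eLoss q b y x ≤ ε ∧ z = y + x * p} (y₀ + x * p) := by
    constructor
    · exact ⟨y₀, hy₀0, hL0, rfl⟩
    · rintro z ⟨y, hy, hL, rfl⟩
      have := hlb y hy hL
      linarith
  have hc : cost q ε b x p = y₀ + x * p := hleast.csInf_eq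
  refine ⟨by rw [hc]; ring, hy₀0, hL0, hc.symm⟩
end

section
/- Let (q, ε, b) be a buyer type with q·(1 − b) ≤ ε. For every x ≥ (q − ε)/b and every real p ≥ 0, the cost satisfies C(x, p) = x·p, and the infimum defining C(x, p) is attained at y = 0. -/
/-- When q·(1 − b) ≤ ε, for every x ≥ (q − ε)/b and p ≥ 0 the cost is
C(x, p) = x·p, attained at y = 0. -/
theorem stmt5 (q ε b x p : ℝ) (hb0 : 0 < b) (hb1 : b < 1) (hε0 : 0 < ε) (hεq : ε < q)
    (hcase : q * (1 - b) ≤ ε) (hx : (q - ε) / b ≤ x) (hp : 0 ≤ p) :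
    cost q ε b x p = x * p ∧ eLoss q b 0 x ≤ ε ∧ (0 : ℝ) + x * p = cost q ε b x p := by
  have hloss : eLoss q b 0 x ≤ ε := by
    unfold eLoss
    simp only [sub_zero]
    have hxq : b * x ≥ q - ε := by
      have := (div_le_iff₀ hb0).mp hx
      linarith [this]
    rcases le_or_gt q x with h | h
    · have h1 : max (q - x) 0 = 0 := max_eq_right (by linarith)
      have h2 : max q 0 = q := max_eq_left (by linarith)
      rw [h1, h2]; nlinarith
    · have h1 : max (q - x) 0 = q - x := max_eq_left (by linarith)
      have h2 : max q 0 = q := max_eq_left (by linarith)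
      rw [h1, h2]; nlinarith
  have hmem : x * p ∈ {z | ∃ y, 0 ≤ y ∧ eLoss q b y x ≤ ε ∧ z = y + x * p} :=
    ⟨0, le_refl 0, hloss, by ring⟩
  have hbdd : BddBelow {z | ∃ y, 0 ≤ y ∧ eLoss q b y x ≤ ε ∧ z = y + x * p} := by
    refine ⟨x * p, ?_⟩
    rintro z ⟨y, hy, _, rfl⟩
    linarith
  have hcost : cost q ε b x p = x * p := by
    unfold cost
    refine le_antisymm (csInf_le hbdd hmem) (le_csInf ⟨_, hmem⟩ ?_)
    rintro z ⟨y, hy, _, rfl⟩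
    linarith
  exact ⟨hcost, hloss, by rw [hcost]; ring⟩
end

section
/- Let (q, ε, b) be a buyer type with q·(1 − b) > ε. For every x ≥ ε/(1 − b) and every real p ≥ 0, the cost satisfies C(x, p) = q − ε/(1 − b) + x·p, and the infimum defining C(x, p) is attained at y = q − ε/(1 − b). -/
/-- When q·(1 − b) > ε, for every x ≥ ε/(1 − b) and p ≥ 0 the cost is
C(x, p) = q − ε/(1 − b) + x·p, attained at y = q − ε/(1 − b). -/
theorem stmt6 (q ε b x p : ℝ) (hb0 : 0 < b) (hb1 : b < 1) (hε0 : 0 < ε) (hεq : ε < q)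
    (hcase : ε < q * (1 - b)) (hx : ε / (1 - b) ≤ x) (hp : 0 ≤ p) :
    cost q ε b x p = q - ε / (1 - b) + x * p ∧
    0 ≤ q - ε / (1 - b) ∧ eLoss q b (q - ε / (1 - b)) x ≤ ε ∧
    (q - ε / (1 - b)) + x * p = cost q ε b x p := by
  have h1b : 0 < 1 - b := by linarith
  have hy0q : ε / (1 - b) ≤ q := by
    rw [div_le_iff₀ h1b]; nlinarith
  have hy0 : 0 ≤ q - ε / (1 - b) := by linarith
  have hloss : eLoss q b (q - ε / (1 - b)) x ≤ ε := by
    unfold eLoss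
    have h2 : q - (q - ε / (1 - b)) - x ≤ 0 := by linarith
    have h3 : (0:ℝ) ≤ q - (q - ε / (1 - b)) := by
      have : 0 < ε / (1 - b) := div_pos hε0 h1b
      linarith
    rw [max_eq_right h2, max_eq_left h3]
    have : (1 - b) * (q - (q - ε / (1 - b))) = ε := by
      field_simp
      ring
    linarith
  have hmem : (q - ε / (1 - b) + x * p) ∈
      {z | ∃ y, 0 ≤ y ∧ eLoss q b y x ≤ ε ∧ z = y + x * p} :=
    ⟨q - ε / (1 - b), hy0, hloss, rfl⟩
  have hlb : ∀ z ∈ {z | ∃ y, 0 ≤ y ∧ eLoss q b y x ≤ ε ∧ z = y + x * p},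
      q - ε / (1 - b) + x * p ≤ z := by
    rintro z ⟨y, hy, hl, rfl⟩
    have h1 : q - y ≤ max (q - y) 0 := le_max_left _ _
    have h2 : 0 ≤ b * max (q - y - x) 0 :=
      mul_nonneg hb0.le (le_max_right _ _)
    have h3 : (1 - b) * (q - y) ≤ ε := by
      have := mul_le_mul_of_nonneg_left h1 h1b.le
      unfold eLoss at hl
      linarith
    have h4 : q - ε / (1 - b) ≤ y := by
      rw [sub_le_iff_le_add, ← sub_le_iff_le_add', le_div_iff₀ h1b]
      nlinarith
    linarith
  have hcost : cost q ε b x p = q - ε / (1 - b) + x * p := by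
    unfold cost
    exact le_antisymm (csInf_le ⟨_, hlb⟩ hmem) (le_csInf ⟨_, hmem⟩ hlb)
  exact ⟨hcost, hy0, hloss, hcost.symm⟩
end

section
/- Let (q, ε, b) be a buyer type with knee x* = min((q − ε)/b, ε/(1 − b)). For all x > 0, x' > 0 and p' ≥ 0, the equivalent price P(x', p', x) satisfies C(x, P(x', p', x)) = C(x', p'); that is, the contract (x, P(x', p', x)) has the same cost to the buyer as the contract (x', p'). -/
lemma cost_formula (q ε b : ℝ) (hb0 : 0 < b) (hb1 : b < 1) (hε0 : 0 < ε) (hεq : ε < q)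
    (x p : ℝ) (hx : 0 < x) :
    cost q ε b x p = q - ε - b * min x (knee q ε b) + x * p := by
  have hb1' : 0 < 1 - b := by linarith
  set k := knee q ε b with hk
  set m := min x k with hmdef
  have hk1 : k ≤ (q - ε) / b := min_le_left _ _
  have hk2 : k ≤ ε / (1 - b) := min_le_right _ _
  have hm_le_x : m ≤ x := min_le_left _ _
  have hm1 : m ≤ (q - ε) / b := le_trans (min_le_right _ _) hk1
  have hm2 : m ≤ ε / (1 - b) := le_trans (min_le_right _ _) hk2
  have hm1' : b * m ≤ q - ε := by
    nlinarith [(le_div_iff₀ hb0).mp hm1]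
  have hm2' : (1 - b) * m ≤ ε := by
    nlinarith [(le_div_iff₀ hb1').mp hm2]
  have hm0 : 0 ≤ m := by
    apply le_min hx.le
    apply le_min (div_nonneg (by linarith) hb0.le) (div_nonneg hε0.le hb1'.le)
  have hy0 : 0 ≤ q - ε - b * m := by linarith
  -- membership: y₀ = q - ε - b*m is feasible
  have hloss : eLoss q b (q - ε - b * m) x ≤ ε := by
    unfold eLoss
    rcases le_or_gt (q - (q - ε - b * m) - x) 0 with h | h
    · rw [max_eq_right h, max_eq_left (by linarith)]
      nlinarith
    · rw [max_eq_left h.le, max_eq_left (by linarith)]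
      nlinarith
  have hlb : ∀ z ∈ {z | ∃ y, 0 ≤ y ∧ eLoss q b y x ≤ ε ∧ z = y + x * p},
      q - ε - b * m + x * p ≤ z := by
    rintro z ⟨y, hy, hl, rfl⟩
    have hmax1 : q - y - x ≤ max (q - y - x) 0 := le_max_left _ _
    have hmax2 : q - y ≤ max (q - y) 0 := le_max_left _ _
    have hmax3 : (0:ℝ) ≤ max (q - y - x) 0 := le_max_right _ _
    have hmax4 : (0:ℝ) ≤ max (q - y) 0 := le_max_right _ _
    unfold eLoss at hl
    have key : q - ε - b * m ≤ y := by
      rcases le_total x k with hxk | hxk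
      · -- m = x
        have hmx : m = x := min_eq_left hxk
        rw [hmx]
        nlinarith
      · -- m = k
        have hmx : m = k := min_eq_right hxk
        rcases le_total ((q - ε) / b) (ε / (1 - b)) with h1 | h1
        · have hkv : k = (q - ε) / b := min_eq_left h1
          have : b * k = q - ε := by rw [hkv]; field_simp
          rw [hmx]; linarith
        · have hkv : k = ε / (1 - b) := min_eq_right h1
          have hbk : (1 - b) * k = ε := by rw [hkv]; field_simp
          -- loss ≥ (1-b)(q-y) ⟹ y ≥ q - ε/(1-b) = q - ε - b*k... check: q-ε-bk vs q-k
          -- (1-b)k = ε ⟹ k = ε + b k ⟹ q - ε - b k = q - k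
          have h2 : (1 - b) * (q - y) ≤ ε := by nlinarith
          rw [hmx]
          nlinarith
    linarith
  unfold cost
  apply le_antisymm
  · exact csInf_le ⟨q - ε - b * m + x * p, hlb⟩ ⟨q - ε - b * m, hy0, hloss, by ring⟩
  · exact le_csInf ⟨_, q - ε - b * m, hy0, hloss, rfl⟩ hlb

/-- For all x > 0, x' > 0 and p' ≥ 0 the contract (x, P(x', p', x)) has
the same cost to the buyer as the contract (x', p'). -/
theorem stmt7 (q ε b : ℝ) (hb0 : 0 < b) (hb1 : b < 1) (hε0 : 0 < ε) (hεq : ε < q) :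
    ∀ x x' p' : ℝ, 0 < x → 0 < x' → 0 ≤ p' →
      cost q ε b x (eqPrice q ε b x' p' x) = cost q ε b x' p' := by
  intro x x' p' hx hx' _
  rw [cost_formula q ε b hb0 hb1 hε0 hεq x _ hx,
      cost_formula q ε b hb0 hb1 hε0 hεq x' p' hx']
  set k := knee q ε b with hk
  unfold eqPrice
  rw [← hk]
  split_ifs with h1 h2 h3
  · rw [min_eq_left h1.1, min_eq_left h1.2]
    field_simp
    ring
  · rw [min_eq_right h2.1, min_eq_right h2.2]
    field_simp
  · rw [min_eq_right h3.2.le, min_eq_left h3.1.le]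
    field_simp
    ring
  · have hxk : x < k := by
      by_contra hc
      push_neg at hc
      rcases le_or_gt k x' with h | h
      · exact h2 ⟨hc, h⟩
      · exact h3 ⟨h, lt_of_lt_of_le (lt_of_not_ge fun hkx => h1 ⟨hkx, h.le⟩) (le_refl x) |>.trans_le (le_refl x)⟩
    have hkx' : k < x' := by
      by_contra hc
      push_neg at hc
      exact h1 ⟨hxk.le, hc⟩
    rw [min_eq_left hxk.le, min_eq_right hkx'.le]
    field_simp
    ring
end

section
/- Let there be K buyer types (q_i, ε_i, b) (i = 1, …, K) sharing a common channel quality b with 0 < b < 1 and 0 < ε_i < q_i for each i, let 0 ≤ c < b, and let r_1, …, r_K ≥ 0 be probabilities. Write x_i* = min((q_i − ε_i)/b, ε_i/(1 − b)) for the knee of type i. For any family of contracts (x_i, p_i), with x_i ≥ 0, p_i ≥ 0 and (x_i, p_i) acceptable to type i for each i, the seller's expected profit satisfies Σ_{i=1}^K r_i · x_i · (p_i − c) ≤ Σ_{i=1}^K r_i · x_i* · (b − c). -/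
lemma key_profit (q ε b c x p : ℝ) (hb0 : 0 < b) (hb1 : b < 1) (hε0 : 0 < ε)
    (hεq : ε < q) (hc0 : 0 ≤ c) (hcb : c < b) (hx : 0 ≤ x) (hp : 0 ≤ p)
    (h : acceptable q ε b x p) : x * (p - c) ≤ knee q ε b * (b - c) := by
  obtain ⟨y, hy0, hL, hbudget⟩ := h
  have hxp : 0 ≤ x * p := mul_nonneg hx hp
  have hb1' : 0 < 1 - b := by linarith
  have hk1 : knee q ε b * b ≤ q - ε := by
    have h1 : knee q ε b ≤ (q - ε) / b := min_le_left _ _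
    have h2 : ((q - ε) / b) * b = q - ε := by field_simp
    nlinarith
  have hk2 : knee q ε b * (1 - b) ≤ ε := by
    have h1 : knee q ε b ≤ ε / (1 - b) := min_le_right _ _
    have h2 : (ε / (1 - b)) * (1 - b) = ε := by field_simp
    nlinarith
  have hk0 : 0 ≤ knee q ε b := by
    apply le_min
    · exact div_nonneg (by linarith) hb0.le
    · exact div_nonneg hε0.le hb1'.le
  rcases le_or_gt q (y + x) with hA | hB
  · -- stochastic covers the rest
    have hyq : y < q := by
      by_contra hyq
      push_neg at hyq
      nlinarith
    have hLA : (1 - b) * (q - y) ≤ ε := by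
      have h1 : max (q - y - x) 0 = 0 := max_eq_right (by linarith)
      have h2 : max (q - y) 0 = q - y := max_eq_left (by linarith)
      simp only [eLoss, h1, h2, mul_zero, zero_add] at hL
      linarith
    rcases le_or_gt x (knee q ε b) with hx1 | hx2
    · have h3 : x * p ≤ x - ε := by linarith
      have h4 : x * (1 - c) ≤ knee q ε b * (1 - c) :=
        mul_le_mul_of_nonneg_right hx1 (by linarith)
      nlinarith
    · have h4 : x * p ≤ knee q ε b * b := by
        rcases min_cases ((q - ε) / b) (ε / (1 - b)) with ⟨he, _⟩ | ⟨he, hle⟩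
        · have : knee q ε b * b = q - ε := by
            rw [knee, he]; field_simp
          linarith
        · have hkb : knee q ε b * (1 - b) = ε := by
            rw [knee, he]; field_simp
          nlinarith
      nlinarith
  · -- interior case
    have hqyx : 0 < q - y - x := by linarith
    have hLB : q - y - b * x ≤ ε := by
      have h1 : max (q - y - x) 0 = q - y - x := max_eq_left (le_of_lt hqyx)
      have h2 : max (q - y) 0 = q - y := max_eq_left (by linarith)
      simp only [eLoss, h1, h2] at hL
      nlinarith
    have h5 : x * p ≤ b * x := by linarith
    rcases le_or_gt (b * x) (q - ε) with hm | hm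
    · have hxk : x ≤ knee q ε b := by
        apply le_min
        · rw [le_div_iff₀ hb0]; linarith
        · rw [le_div_iff₀ hb1']; nlinarith
      nlinarith
    · have hxb : x * (1 - b) < ε := by nlinarith
      have hle : (q - ε) / b ≤ ε / (1 - b) := by
        rw [div_le_div_iff₀ hb0 hb1']
        nlinarith
      have hkb : knee q ε b * b = q - ε := by
        rw [knee, min_eq_left hle]; field_simp
      have hkx : knee q ε b ≤ x := by
        have h2 : (q - ε) / b ≤ x := by rw [div_le_iff₀ hb0]; linarith
        calc knee q ε b ≤ (q - ε) / b := min_le_left _ _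
        _ ≤ x := h2
      have h6 : knee q ε b * c ≤ x * c := mul_le_mul_of_nonneg_right hkx hc0
      have e1 : x * (p - c) = x * p - x * c := by ring
      have e2 : knee q ε b * (b - c) = knee q ε b * b - knee q ε b * c := by ring
      linarith

/-- With K types sharing a common channel quality b, any family of
per-type acceptable contracts gives the seller expected profit at most
Σ r_i · x_i* · (b − c). -/
theorem stmt9 (K : ℕ) (q ε : Fin K → ℝ) (b c : ℝ) (r : Fin K → ℝ)
    (hb0 : 0 < b) (hb1 : b < 1) (hε0 : ∀ i, 0 < ε i) (hεq : ∀ i, ε i < q i)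
    (hc0 : 0 ≤ c) (hcb : c < b) (hr : ∀ i, 0 ≤ r i) (hrsum : ∑ i, r i = 1)
    (x p : Fin K → ℝ) (hx : ∀ i, 0 ≤ x i) (hp : ∀ i, 0 ≤ p i)
    (hacc : ∀ i, acceptable (q i) (ε i) b (x i) (p i)) :
    ∑ i, r i * (x i * (p i - c)) ≤ ∑ i, r i * (knee (q i) (ε i) b * (b - c)) := by
  apply Finset.sum_le_sum
  intro i _
  exact mul_le_mul_of_nonneg_left
    (key_profit (q i) (ε i) b c (x i) (p i) hb0 hb1 (hε0 i) (hεq i) hc0 hcb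
      (hx i) (hp i) (hacc i)) (hr i)
end

section
/- Let there be K buyer types (q_i, ε_i, b) (i = 1, …, K) sharing a common channel quality b with 0 < b < 1 and 0 < ε_i < q_i for each i, and write x_i* = min((q_i − ε_i)/b, ε_i/(1 − b)) for the knee of type i and C_i for the cost function of type i. Then the contract set {(x_1*, b), …, (x_K*, b)} is incentive compatible: for all i and j, C_i(x_i*, b) = q_i − ε_i ≤ C_i(x_j*, b); that is, each type-i buyer weakly prefers the contract (x_i*, b) to every other contract (x_j*, b), and its cost equals its reserve price q_i − ε_i. -/
lemma lower_aux {q ε b x : ℝ} (hb0 : 0 < b) (hb1 : b < 1) :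
    ∀ z ∈ {z | ∃ y, 0 ≤ y ∧ eLoss q b y x ≤ ε ∧ z = y + x * b}, q - ε ≤ z := by
  rintro z ⟨y, _, hL, rfl⟩
  have h1 : b * (q - y - x) ≤ b * max (q - y - x) 0 :=
    mul_le_mul_of_nonneg_left (le_max_left _ _) hb0.le
  have h2 : (1 - b) * (q - y) ≤ (1 - b) * max (q - y) 0 :=
    mul_le_mul_of_nonneg_left (le_max_left _ _) (by linarith)
  have : b * (q - y - x) + (1 - b) * (q - y) ≤ ε := by
    calc b * (q - y - x) + (1 - b) * (q - y) ≤ eLoss q b y x := by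
          unfold eLoss; linarith
      _ ≤ ε := hL
  nlinarith

lemma knee_nonneg {q ε b : ℝ} (hb0 : 0 < b) (hb1 : b < 1) (hε0 : 0 < ε) (hεq : ε < q) :
    0 ≤ knee q ε b := by
  unfold knee
  have h1 : 0 ≤ (q - ε) / b := div_nonneg (by linarith) hb0.le
  have h2 : 0 ≤ ε / (1 - b) := div_nonneg hε0.le (by linarith)
  exact le_min h1 h2

lemma cost_lb {q ε b x : ℝ} (hb0 : 0 < b) (hb1 : b < 1) (hε0 : 0 < ε) (hεq : ε < q)
    (hx : 0 ≤ x) : q - ε ≤ cost q ε b x b := by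
  apply le_csInf
  · refine ⟨q + x * b, q, by linarith, ?_, rfl⟩
    unfold eLoss
    rw [max_eq_right (by linarith : q - q - x ≤ 0), max_eq_right (by linarith : q - q ≤ 0)]
    simp; linarith
  · exact lower_aux hb0 hb1

/-- With a common channel quality b, the contract set
{(x_i*, b)} is incentive compatible: each type-i buyer's cost at (x_i*, b) equals
its reserve price q_i − ε_i and is no larger than its cost at any (x_j*, b). -/
theorem stmt10 (K : ℕ) (q ε : Fin K → ℝ) (b : ℝ)
    (hb0 : 0 < b) (hb1 : b < 1) (hε0 : ∀ i, 0 < ε i) (hεq : ∀ i, ε i < q i) :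
    ∀ i j : Fin K,
      cost (q i) (ε i) b (knee (q i) (ε i) b) b = q i - ε i ∧
      cost (q i) (ε i) b (knee (q i) (ε i) b) b ≤
        cost (q i) (ε i) b (knee (q j) (ε j) b) b := by
  intro i j
  set x := knee (q i) (ε i) b with hx
  have hx0 : 0 ≤ x := knee_nonneg hb0 hb1 (hε0 i) (hεq i)
  have hx1 : b * x ≤ q i - ε i := by
    have : x ≤ (q i - ε i) / b := min_le_left _ _
    calc b * x ≤ b * ((q i - ε i) / b) := by nlinarith
      _ = q i - ε i := by field_simp
  have hx2 : (1 - b) * x ≤ ε i := by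
    have : x ≤ ε i / (1 - b) := min_le_right _ _
    calc (1 - b) * x ≤ (1 - b) * (ε i / (1 - b)) := by nlinarith
      _ = ε i := by rw [mul_div_cancel₀]; linarith
  have hmem : q i - ε i ∈ {z | ∃ y, 0 ≤ y ∧ eLoss (q i) b y x ≤ ε i ∧ z = y + x * b} := by
    refine ⟨q i - ε i - b * x, by linarith, ?_, by ring⟩
    unfold eLoss
    have e1 : max (q i - (q i - ε i - b * x) - x) 0 = ε i - (1 - b) * x := by
      rw [max_eq_left (by linarith)]; ring
    have e2 : max (q i - (q i - ε i - b * x)) 0 = ε i + b * x := by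
      rw [max_eq_left (by nlinarith)]; ring
    rw [e1, e2]; ring_nf; nlinarith
  have heq : cost (q i) (ε i) b x b = q i - ε i := by
    apply le_antisymm
    · exact csInf_le ⟨q i - ε i, lower_aux hb0 hb1⟩ hmem
    · exact le_csInf ⟨_, hmem⟩ (lower_aux hb0 hb1)
  refine ⟨heq, ?_⟩
  rw [heq]
  exact cost_lb hb0 hb1 (hε0 i) (hεq i) (knee_nonneg hb0 hb1 (hε0 j) (hεq j))
end

section
/- Let there be two buyer types (q_1, ε_1, b_1) and (q_2, ε_2, b_2) with 0 < b_i < 1 and 0 < ε_i < q_i, knees x_i* = min((q_i − ε_i)/b_i, ε_i/(1 − b_i)), cost functions C_1, C_2, probabilities r_1, r_2 ≥ 0, and seller's unit cost c with 0 ≤ c < b_1 and c < b_2. Suppose the contract (x_1*, b_1) is not acceptable to type 2 and the contract (x_2*, b_2) is not acceptable to type 1. Then: (a) the pair {(x_1*, b_1), (x_2*, b_2)} is incentive compatible, i.e., C_1(x_1*, b_1) = q_1 − ε_1 < C_1(x_2*, b_2) and C_2(x_2*, b_2) = q_2 − ε_2 < C_2(x_1*, b_1); and (b) this pair is optimal: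 for any contracts (x_1, p_1) acceptable to type 1 and (x_2, p_2) acceptable to type 2 (with x_i, p_i ≥ 0), r_1·x_1·(p_1 − c) + r_2·x_2·(p_2 − c) ≤ r_1·x_1*·(b_1 − c) + r_2·x_2*·(b_2 − c). -/
noncomputable def Ymin (q ε b x : ℝ) : ℝ :=
  max 0 (q - ε - b * min x (ε / (1 - b)))

lemma lem1 (q ε b x : ℝ) (hb0 : 0 < b) (hb1 : b < 1)
    (hε : 0 < ε) (hq : ε < q) (hx : 0 ≤ x) :
    eLoss q b (Ymin q ε b x) x ≤ ε := by
  have h1b : 0 < 1 - b := by linarith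
  unfold eLoss Ymin
  rcases le_total x (ε / (1 - b)) with hxe | hxe
  · rw [min_eq_left hxe]
    have hbx : (1 - b) * x ≤ ε := by
      rw [le_div_iff₀ h1b] at hxe; linarith [hxe]
    rcases le_total (q - ε - b * x) 0 with hY | hY
    · rw [max_eq_left hY]
      have h2 : q - 0 = max (q - 0) 0 := (max_eq_left (by linarith)).symm
      rw [← h2]
      rcases le_total (q - 0 - x) 0 with h1 | h1
      · rw [max_eq_right h1]; nlinarith
      · rw [max_eq_left h1]; nlinarith
    · rw [max_eq_right hY]
      have h1 : 0 ≤ q - (q - ε - b * x) - x := by nlinarith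
      have h2 : 0 ≤ q - (q - ε - b * x) := by nlinarith
      rw [max_eq_left h1, max_eq_left h2]; nlinarith
  · rw [min_eq_right hxe]
    have hbx : ε ≤ (1 - b) * x := by
      rw [div_le_iff₀ h1b] at hxe; linarith
    have hkey : q - ε - b * (ε / (1 - b)) = q - ε / (1 - b) := by
      field_simp; ring
    rw [hkey]
    rcases le_total (q - ε / (1 - b)) 0 with hY | hY
    · rw [max_eq_left hY]
      have hqe : (1 - b) * q ≤ ε := by
        have h3 : q ≤ ε / (1 - b) := by linarith
        rw [le_div_iff₀ h1b] at h3; linarith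
      have h2 : q - 0 = max (q - 0) 0 := (max_eq_left (by linarith)).symm
      rw [← h2]
      rcases le_total (q - 0 - x) 0 with h1 | h1
      · rw [max_eq_right h1]; nlinarith
      · rw [max_eq_left h1]; nlinarith
    · rw [max_eq_right hY]
      have h1 : q - (q - ε / (1 - b)) - x ≤ 0 := by
        have : ε / (1 - b) ≤ x := hxe
        linarith
      have h2 : 0 ≤ q - (q - ε / (1 - b)) := by
        have h3 : q - (q - ε / (1 - b)) = ε / (1 - b) := by ring
        rw [h3]; positivity
      rw [max_eq_right h1, max_eq_left h2]
      have h3 : q - (q - ε / (1 - b)) = ε / (1 - b) := by ring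
      rw [h3]
      rw [mul_div_cancel₀ ε (ne_of_gt h1b)]
      linarith

lemma lem2 (q ε b x y : ℝ) (hb0 : 0 < b) (hb1 : b < 1)
    (hε : 0 < ε) (hq : ε < q) (hx : 0 ≤ x) (hy : 0 ≤ y)
    (hL : eLoss q b y x ≤ ε) : Ymin q ε b x ≤ y := by
  have h1b : 0 < 1 - b := by linarith
  unfold Ymin
  rcases le_total (q - ε - b * min x (ε / (1 - b))) 0 with hY | hY
  · rw [max_eq_left hY]; exact hy
  rw [max_eq_right hY]
  by_contra h
  push_neg at h
  unfold eLoss at hL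
  rcases le_total x (ε / (1 - b)) with hxe | hxe
  · rw [min_eq_left hxe] at h hY
    have hbx : (1 - b) * x ≤ ε := by
      rw [le_div_iff₀ h1b] at hxe; linarith
    have h1 : 0 ≤ q - y - x := by nlinarith
    have h2 : 0 ≤ q - y := by nlinarith
    rw [max_eq_left h1, max_eq_left h2] at hL
    nlinarith
  · rw [min_eq_right hxe] at h hY
    have hkey : q - ε - b * (ε / (1 - b)) = q - ε / (1 - b) := by
      field_simp; ring
    rw [hkey] at h hY
    have h2 : ε / (1 - b) < q - y := by linarith
    have h3 : ε < (1 - b) * (q - y) := by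
      rw [div_lt_iff₀ h1b] at h2; linarith
    have h4 : max (q - y) 0 = q - y := max_eq_left (by nlinarith [div_pos hε h1b])
    rw [h4] at hL
    nlinarith [mul_nonneg (le_of_lt hb0) (le_max_right (q - y - x) 0)]

lemma knee_le1 (q ε b : ℝ) : min ((q-ε)/b) (ε/(1-b)) ≤ (q-ε)/b := min_le_left _ _


lemma cost_eq (q ε b x p : ℝ) (hb0 : 0 < b) (hb1 : b < 1)
    (hε : 0 < ε) (hq : ε < q) (hx : 0 ≤ x) :
    cost q ε b x p = Ymin q ε b x + x * p := by
  unfold cost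
  have hmem : Ymin q ε b x + x * p ∈
      {z | ∃ y, 0 ≤ y ∧ eLoss q b y x ≤ ε ∧ z = y + x * p} :=
    ⟨Ymin q ε b x, le_max_left _ _, lem1 q ε b x hb0 hb1 hε hq hx, rfl⟩
  have hlb : ∀ z ∈ {z | ∃ y, 0 ≤ y ∧ eLoss q b y x ≤ ε ∧ z = y + x * p},
      Ymin q ε b x + x * p ≤ z := by
    rintro z ⟨y, hy, hL, rfl⟩
    have := lem2 q ε b x y hb0 hb1 hε hq hx hy hL
    linarith
  exact le_antisymm (csInf_le ⟨_, hlb⟩ hmem) (le_csInf ⟨_, hmem⟩ hlb)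

lemma acc_iff (q ε b x p : ℝ) (hb0 : 0 < b) (hb1 : b < 1)
    (hε : 0 < ε) (hq : ε < q) (hx : 0 ≤ x) :
    (∃ y, 0 ≤ y ∧ eLoss q b y x ≤ ε ∧ y + x * p ≤ q - ε) ↔
      Ymin q ε b x + x * p ≤ q - ε := by
  constructor
  · rintro ⟨y, hy, hL, hle⟩
    have := lem2 q ε b x y hb0 hb1 hε hq hx hy hL
    linarith
  · intro h
    exact ⟨Ymin q ε b x, le_max_left _ _, lem1 q ε b x hb0 hb1 hε hq hx, h⟩

lemma knee_pos (q ε b : ℝ) (hb0 : 0 < b) (hb1 : b < 1)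
    (hε : 0 < ε) (hq : ε < q) : 0 < knee q ε b := by
  have h1b : 0 < 1 - b := by linarith
  exact lt_min (div_pos (by linarith) hb0) (div_pos hε h1b)

lemma cost_knee (q ε b : ℝ) (hb0 : 0 < b) (hb1 : b < 1)
    (hε : 0 < ε) (hq : ε < q) :
    cost q ε b (knee q ε b) b = q - ε := by
  have h1b : 0 < 1 - b := by linarith
  have hx : 0 ≤ knee q ε b := le_of_lt (knee_pos q ε b hb0 hb1 hε hq)
  rw [cost_eq q ε b _ b hb0 hb1 hε hq hx]
  have hmin : min (knee q ε b) (ε / (1 - b)) = knee q ε b :=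
    min_eq_left (min_le_right _ _)
  have hble : b * knee q ε b ≤ q - ε := by
    have h1 : knee q ε b ≤ (q - ε) / b := min_le_left _ _
    rw [le_div_iff₀ hb0] at h1; linarith
  unfold Ymin
  rw [hmin, max_eq_right (by linarith)]
  ring

lemma single_opt (q ε b x p c : ℝ) (hb0 : 0 < b) (hb1 : b < 1)
    (hε : 0 < ε) (hq : ε < q) (hx : 0 ≤ x) (hp : 0 ≤ p)
    (hc0 : 0 ≤ c) (hcb : c < b)
    (hacc : ∃ y, 0 ≤ y ∧ eLoss q b y x ≤ ε ∧ y + x * p ≤ q - ε) :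
    x * (p - c) ≤ knee q ε b * (b - c) := by
  have h1b : 0 < 1 - b := by linarith
  rw [acc_iff q ε b x p hb0 hb1 hε hq hx] at hacc
  have hkpos := knee_pos q ε b hb0 hb1 hε hq
  have hkey : x * p ≤ b * min x (knee q ε b) := by
    rcases le_total x (knee q ε b) with hxk | hxk
    · rw [min_eq_left hxk]
      have hxe : x ≤ ε / (1 - b) := le_trans hxk (min_le_right _ _)
      have hxq : b * x ≤ q - ε := by
        have h1 : x ≤ (q - ε) / b := le_trans hxk (min_le_left _ _)
        rw [le_div_iff₀ hb0] at h1; linarith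
      have hY : Ymin q ε b x = q - ε - b * x := by
        unfold Ymin
        rw [min_eq_left hxe, max_eq_right (by linarith)]
      rw [hY] at hacc; linarith
    · rw [min_eq_right hxk]
      rcases le_total ((q - ε) / b) (ε / (1 - b)) with hk | hk
      · have hkv : knee q ε b = (q - ε) / b := min_eq_left hk
        have hY : 0 ≤ Ymin q ε b x := le_max_left _ _
        have : x * p ≤ q - ε := by linarith
        rw [hkv, mul_div_cancel₀ _ (ne_of_gt hb0)] at *
        linarith
      · have hkv : knee q ε b = ε / (1 - b) := min_eq_right hk
        have hxe : ε / (1 - b) ≤ x := by rw [← hkv]; exact hxk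
        have hY : Ymin q ε b x = q - ε - b * (ε / (1 - b)) := by
          unfold Ymin
          rw [min_eq_right hxe]
          apply max_eq_right
          have h2 : ε / (1 - b) ≤ (q - ε) / b := hk
          rw [div_le_div_iff₀ h1b hb0] at h2
          have h3 : b * (ε / (1 - b)) = ε * b / (1 - b) := by ring
          have h4 : b * (ε / (1 - b)) ≤ q - ε := by
            rw [h3, div_le_iff₀ h1b]; linarith
          linarith
        rw [hY] at hacc
        rw [hkv]
        linarith
  have hmin : b * min x (knee q ε b) - c * x ≤ knee q ε b * (b - c) := by
    rcases le_total x (knee q ε b) with hxk | hxk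
    · rw [min_eq_left hxk]; nlinarith
    · rw [min_eq_right hxk]; nlinarith
  nlinarith

lemma not_acc_cost (q ε b x p : ℝ) (hb0 : 0 < b) (hb1 : b < 1)
    (hε : 0 < ε) (hq : ε < q) (hx : 0 ≤ x)
    (hn : ¬ acceptable q ε b x p) : q - ε < cost q ε b x p := by
  rw [cost_eq q ε b x p hb0 hb1 hε hq hx]
  by_contra h
  push_neg at h
  exact hn ((acc_iff q ε b x p hb0 hb1 hε hq hx).mpr h)

/-- With two types such that max_1 ∉ T_2 and max_2 ∉ T_1, the pair
{(x_1*, b_1), (x_2*, b_2)} is incentive compatible and optimal. -/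
theorem stmt11 (q1 ε1 b1 q2 ε2 b2 r1 r2 c : ℝ)
    (hb10 : 0 < b1) (hb11 : b1 < 1) (hb20 : 0 < b2) (hb21 : b2 < 1)
    (hε1 : 0 < ε1) (hq1 : ε1 < q1) (hε2 : 0 < ε2) (hq2 : ε2 < q2)
    (hr1 : 0 ≤ r1) (hr2 : 0 ≤ r2)
    (hc0 : 0 ≤ c) (hcb1 : c < b1) (hcb2 : c < b2)
    (hn1 : ¬ acceptable q2 ε2 b2 (knee q1 ε1 b1) b1)
    (hn2 : ¬ acceptable q1 ε1 b1 (knee q2 ε2 b2) b2) :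
    (cost q1 ε1 b1 (knee q1 ε1 b1) b1 = q1 - ε1 ∧
     q1 - ε1 < cost q1 ε1 b1 (knee q2 ε2 b2) b2 ∧
     cost q2 ε2 b2 (knee q2 ε2 b2) b2 = q2 - ε2 ∧
     q2 - ε2 < cost q2 ε2 b2 (knee q1 ε1 b1) b1) ∧
    (∀ x1 p1 x2 p2 : ℝ, 0 ≤ x1 → 0 ≤ p1 → 0 ≤ x2 → 0 ≤ p2 →
      acceptable q1 ε1 b1 x1 p1 → acceptable q2 ε2 b2 x2 p2 →
      r1 * (x1 * (p1 - c)) + r2 * (x2 * (p2 - c)) ≤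
        r1 * (knee q1 ε1 b1 * (b1 - c)) + r2 * (knee q2 ε2 b2 * (b2 - c))) := by
  constructor
  · refine ⟨cost_knee q1 ε1 b1 hb10 hb11 hε1 hq1, ?_, cost_knee q2 ε2 b2 hb20 hb21 hε2 hq2, ?_⟩
    · exact not_acc_cost q1 ε1 b1 _ b2 hb10 hb11 hε1 hq1
        (le_of_lt (knee_pos q2 ε2 b2 hb20 hb21 hε2 hq2)) hn2
    · exact not_acc_cost q2 ε2 b2 _ b1 hb20 hb21 hε2 hq2
        (le_of_lt (knee_pos q1 ε1 b1 hb10 hb11 hε1 hq1)) hn1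
  · intro x1 p1 x2 p2 hx1 hp1 hx2 hp2 ha1 ha2
    have h1 := single_opt q1 ε1 b1 x1 p1 c hb10 hb11 hε1 hq1 hx1 hp1 hc0 hcb1 ha1
    have h2 := single_opt q2 ε2 b2 x2 p2 c hb20 hb21 hε2 hq2 hx2 hp2 hc0 hcb2 ha2
    exact add_le_add (mul_le_mul_of_nonneg_left h1 hr1) (mul_le_mul_of_nonneg_left h2 hr2)
end

section
/- Let (q_i, ε_i, b_i) and (q_j, ε_j, b_j) be two buyer types with 0 < b_i ≤ b_j < 1 and 0 < ε_i < q_i, 0 < ε_j < q_j, whose knees satisfy the monotonicity condition x_i* ≤ x_j*, where x* = min((q − ε)/b, ε/(1 − b)). Let (x', p') with x' > 0, p' ≥ 0 be a contract acceptable to both types. Then for every x with 0 < x < x', the equivalent prices satisfy P_i(x', p', x) ≥ P_j(x', p', x), where P_i and P_j denote the equivalent-price functions of types i and j respectively. -/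
/-- Under the monotonicity condition, for b_i ≤ b_j and a contract
(x', p') acceptable to both types, for every x with 0 < x < x' the equivalent
prices satisfy P_i(x', p', x) ≥ P_j(x', p', x). -/
theorem stmt13 (qi εi bi qj εj bj x' p' : ℝ)
    (hbi0 : 0 < bi) (hbi1 : bi < 1) (hbj0 : 0 < bj) (hbj1 : bj < 1) (hbij : bi ≤ bj)
    (hεi : 0 < εi) (hqi : εi < qi) (hεj : 0 < εj) (hqj : εj < qj)
    (hMC : knee qi εi bi ≤ knee qj εj bj)
    (hx' : 0 < x') (hp' : 0 ≤ p')
    (hacci : acceptable qi εi bi x' p') (haccj : acceptable qj εj bj x' p') :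
    ∀ x : ℝ, 0 < x → x < x' →
      eqPrice qj εj bj x' p' x ≤ eqPrice qi εi bi x' p' x := by
  intro x hx hxx'
  unfold eqPrice
  set ki := knee qi εi bi with hki
  set kj := knee qj εj bj with hkj
  have hxne : x ≠ 0 := hx.ne'
  have hdiv : (1:ℝ) ≤ x' / x := (one_le_div hx).mpr hxx'.le
  rcases le_or_gt x' ki with h1 | h1
  · -- x' ≤ ki ≤ kj : both in branch A
    have hxki : x ≤ ki := (hxx'.trans_le h1).le
    have hxkj : x ≤ kj := hxki.trans hMC
    rw [if_pos ⟨hxkj, h1.trans hMC⟩, if_pos ⟨hxki, h1⟩]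
    nlinarith [mul_le_mul_of_nonneg_left hdiv (sub_nonneg.mpr hbij)]
  · have hnAi : ¬(x ≤ ki ∧ x' ≤ ki) := fun h => absurd h.2 (not_le.mpr h1)
    rcases le_or_gt x' kj with h2 | h2
    · -- ki < x' ≤ kj : j in branch A
      have hxkj : x ≤ kj := (hxx'.trans_le h2).le
      rw [if_pos ⟨hxkj, h2⟩, if_neg hnAi]
      rcases le_or_gt ki x with h3 | h3
      · -- i in branch B
        rw [if_pos ⟨h3, h1.le⟩]
        have e : x' * p' / x = (x' / x) * p' := by ring
        rw [e]
        nlinarith [mul_le_mul_of_nonneg_left hdiv hbj0.le]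
      · -- i in branch C4
        rw [if_neg (fun h => absurd h.1 (not_le.mpr h3)),
            if_neg (fun h => absurd h.1 (not_lt.mpr h1.le))]
        have e1 : bj - (x' / x) * (bj - p') = (bj * x - x' * (bj - p')) / x := by
          field_simp
        have e2 : bi - (ki * bi - x' * p') / x = (bi * x - (ki * bi - x' * p')) / x := by
          field_simp
        rw [e1, e2, div_le_div_iff_of_pos_right hx]
        nlinarith [mul_nonneg (sub_nonneg.mpr hbij) (sub_nonneg.mpr h3.le),
          mul_nonneg hbj0.le (sub_nonneg.mpr h1.le)]
    · -- kj < x' : neither in branch A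
      have hnAj : ¬(x ≤ kj ∧ x' ≤ kj) := fun h => absurd h.2 (not_le.mpr h2)
      rw [if_neg hnAi, if_neg hnAj]
      rcases le_or_gt kj x with h3 | h3
      · -- both in branch B
        rw [if_pos ⟨h3, h2.le⟩, if_pos ⟨hMC.trans h3, h1.le⟩]
      · -- j in branch C4
        rw [if_neg (fun h => absurd h.1 (not_le.mpr h3)),
            if_neg (fun (h : x' < kj ∧ kj < x) => absurd h.1 (not_lt.mpr h2.le))]
        have e2 : bj - (kj * bj - x' * p') / x = (bj * x - (kj * bj - x' * p')) / x := by
          field_simp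
        rw [e2]
        rcases le_or_gt ki x with h4 | h4
        · -- i in branch B
          rw [if_pos ⟨h4, h1.le⟩, div_le_div_iff_of_pos_right hx]
          nlinarith [mul_nonneg hbj0.le (sub_nonneg.mpr h3.le)]
        · -- i in branch C4
          rw [if_neg (fun h => absurd h.1 (not_le.mpr h4)),
              if_neg (fun (h : x' < ki ∧ ki < x) => absurd h.1 (not_lt.mpr h1.le))]
          have e1 : bi - (ki * bi - x' * p') / x = (bi * x - (ki * bi - x' * p')) / x := by
            field_simp
          rw [e1, div_le_div_iff_of_pos_right hx]
          nlinarith [mul_nonneg (sub_nonneg.mpr hbij) (sub_nonneg.mpr h4.le),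
            mul_nonneg hbj0.le (sub_nonneg.mpr hMC)]
end

section
/- Let (q_i, ε_i, b_i) and (q_j, ε_j, b_j) be two buyer types with 0 < b_i ≤ b_j < 1 and 0 < ε_i < q_i, 0 < ε_j < q_j, whose knees satisfy the monotonicity condition x_i* ≤ x_j*, where x* = min((q − ε)/b, ε/(1 − b)). Let (x', p') with x' > 0, p' ≥ 0 be a contract acceptable to both types. Then for every x with x > x', the equivalent prices satisfy P_i(x', p', x) ≤ P_j(x', p', x), where P_i and P_j denote the equivalent-price functions of types i and j respectively. -/
lemma eqA (q ε b x' p' x : ℝ) (h : x ≤ knee q ε b) (h' : x' ≤ knee q ε b) :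
    eqPrice q ε b x' p' x = b - (x' / x) * (b - p') := by
  unfold eqPrice; rw [if_pos ⟨h, h'⟩]

lemma eqB (q ε b x' p' x : ℝ) (h : knee q ε b < x) (h' : knee q ε b ≤ x') :
    eqPrice q ε b x' p' x = x' * p' / x := by
  unfold eqPrice
  rw [if_neg (fun hc => absurd hc.1 (not_le.2 h)), if_pos ⟨h.le, h'⟩]

lemma eqC (q ε b x' p' x : ℝ) (h : knee q ε b < x) (h' : x' < knee q ε b) :
    eqPrice q ε b x' p' x = (b * (knee q ε b - x') + x' * p') / x := by
  unfold eqPrice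
  rw [if_neg (fun hc => absurd hc.1 (not_le.2 h)),
    if_neg (fun hc => absurd hc.2 (not_le.2 h')), if_pos ⟨h', h⟩]

/-- Under the monotonicity condition, for b_i ≤ b_j and a contract
(x', p') acceptable to both types, for every x > x' the equivalent prices satisfy
P_i(x', p', x) ≤ P_j(x', p', x). -/
theorem stmt14 (qi εi bi qj εj bj x' p' : ℝ)
    (hbi0 : 0 < bi) (hbi1 : bi < 1) (hbj0 : 0 < bj) (hbj1 : bj < 1) (hbij : bi ≤ bj)
    (hεi : 0 < εi) (hqi : εi < qi) (hεj : 0 < εj) (hqj : εj < qj)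
    (hMC : knee qi εi bi ≤ knee qj εj bj)
    (hx' : 0 < x') (hp' : 0 ≤ p')
    (hacci : acceptable qi εi bi x' p') (haccj : acceptable qj εj bj x' p') :
    ∀ x : ℝ, x' < x →
      eqPrice qi εi bi x' p' x ≤ eqPrice qj εj bj x' p' x := by
  intro x hx
  have hx0 : (0:ℝ) < x := hx'.trans hx
  have hr : x' / x < 1 := (div_lt_one hx0).2 hx
  have hr0 : 0 ≤ x' / x := div_nonneg hx'.le hx0.le
  rcases le_or_gt x (knee qi εi bi) with hA | hA'
  · -- x ≤ ki ≤ kj : both branch A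
    have hx'ki : x' ≤ knee qi εi bi := hx.le.trans hA
    rw [eqA qi εi bi x' p' x hA hx'ki,
      eqA qj εj bj x' p' x (hA.trans hMC) (hx'ki.trans hMC)]
    nlinarith
  · rcases le_or_gt (knee qi εi bi) x' with hB | hC
    · -- type i branch B
      rw [eqB qi εi bi x' p' x hA' hB]
      rcases le_or_gt x (knee qj εj bj) with jA | jA'
      · rw [eqA qj εj bj x' p' x jA (hx.le.trans jA)]
        have : x' * p' / x = (x' / x) * p' := by ring
        rw [this]; nlinarith
      · rcases le_or_gt (knee qj εj bj) x' with jB | jC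
        · rw [eqB qj εj bj x' p' x jA' jB]
        · rw [eqC qj εj bj x' p' x jA' jC]
          gcongr ?_ / x
          nlinarith
    · -- type i branch C : x' < ki < x
      rw [eqC qi εi bi x' p' x hA' hC]
      rcases le_or_gt x (knee qj εj bj) with jA | jA'
      · rw [eqA qj εj bj x' p' x jA (hx.le.trans jA)]
        have hrw : bj - (x' / x) * (bj - p') = (bj * (x - x') + x' * p') / x := by
          field_simp; ring
        rw [hrw]
        gcongr ?_ / x
        nlinarith
      · rcases le_or_gt (knee qj εj bj) x' with jB | jC
        · exact absurd (hMC.trans jB) (not_le.2 hC)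
        · rw [eqC qj εj bj x' p' x jA' jC]
          gcongr ?_ / x
          nlinarith
end

section
/- Let there be K buyer types (q_i, ε_i, b_i) (i = 1, …, K) with 0 < b_1 ≤ b_2 ≤ … ≤ b_K < 1 and 0 < ε_i < q_i, whose knees x_i* = min((q_i − ε_i)/b_i, ε_i/(1 − b_i)) satisfy the monotonicity condition x_1* ≤ x_2* ≤ … ≤ x_K*. Let 0 < x_1 ≤ x_2 ≤ … ≤ x_K be bandwidths with x_i ≤ x_i* for every i, and define prices recursively by p_1 = b_1 and p_i = b_i − (x_{i−1}/x_i)·(b_i − p_{i−1}) for i = 2, …, K. Suppose p'_1, …, p'_K are any prices such that C_1(x_1, p'_1) ≤ q_1 − ε_1 and, for each i = 2, …, K, C_i(x_i, p'_i) ≤ C_i(x_{i−1}, p'_{i−1}), where C_i is the cost function of type i. Then p'_i ≤ p_i for every i; that is, no individually rational, incentive-compatible price assignment on the same bandwidths can charge any type more than the recursively constructed prices. -/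
/-- Closed form for the cost below the knee. -/
lemma cost_eq_of_le_knee (q ε b x p : ℝ) (hb0 : 0 < b) (hb1 : b < 1) (hε0 : 0 < ε)
    (hx0 : 0 ≤ x) (hxk : x ≤ knee q ε b) :
    cost q ε b x p = q - ε - b * x + x * p := by
  have hk1 : x ≤ (q - ε) / b := hxk.trans (min_le_left _ _)
  have hk2 : x ≤ ε / (1 - b) := hxk.trans (min_le_right _ _)
  have hbx : x * b ≤ q - ε := (le_div_iff₀ hb0).mp hk1
  have hbx2 : x * (1 - b) ≤ ε := (le_div_iff₀ (by linarith)).mp hk2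
  have hlb : ∀ z ∈ {z | ∃ y, 0 ≤ y ∧ eLoss q b y x ≤ ε ∧ z = y + x * p},
      q - ε - b * x + x * p ≤ z := by
    rintro z ⟨y, hy0, hL, rfl⟩
    have h1 : b * (q - y - x) ≤ b * max (q - y - x) 0 :=
      mul_le_mul_of_nonneg_left (le_max_left _ _) hb0.le
    have h2 : (1 - b) * (q - y) ≤ (1 - b) * max (q - y) 0 :=
      mul_le_mul_of_nonneg_left (le_max_left _ _) (by linarith)
    have : b * (q - y - x) + (1 - b) * (q - y) ≤ ε := by
      have := hL; unfold eLoss at this; linarith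
    nlinarith
  have hmem : q - ε - b * x + x * p ∈
      {z | ∃ y, 0 ≤ y ∧ eLoss q b y x ≤ ε ∧ z = y + x * p} := by
    refine ⟨q - ε - b * x, by nlinarith, ?_, by ring⟩
    unfold eLoss
    have e1 : q - (q - ε - b * x) - x = ε - (1 - b) * x := by ring
    have e2 : q - (q - ε - b * x) = ε + b * x := by ring
    rw [e1, e2, max_eq_left (by nlinarith), max_eq_left (by nlinarith)]
    nlinarith
  exact le_antisymm (csInf_le ⟨_, hlb⟩ hmem) (le_csInf ⟨_, hmem⟩ hlb)

/-- Under the monotonicity condition, no individually rational,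
incentive-compatible price assignment on the same bandwidths can charge any type
more than the recursively constructed prices. -/
theorem stmt17 (K : ℕ) (hK : 0 < K) (q ε b x p p' : ℕ → ℝ)
    (hb0 : ∀ i < K, 0 < b i) (hb1 : ∀ i < K, b i < 1)
    (hε0 : ∀ i < K, 0 < ε i) (hεq : ∀ i < K, ε i < q i)
    (hbmono : ∀ i, i + 1 < K → b i ≤ b (i + 1))
    (hMC : ∀ i, i + 1 < K →
      knee (q i) (ε i) (b i) ≤ knee (q (i + 1)) (ε (i + 1)) (b (i + 1)))
    (hx0 : ∀ i < K, 0 < x i) (hxmono : ∀ i, i + 1 < K → x i ≤ x (i + 1))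
    (hxknee : ∀ i < K, x i ≤ knee (q i) (ε i) (b i))
    (hp0 : p 0 = b 0)
    (hprec : ∀ i, i + 1 < K → p (i + 1) = b (i + 1) - (x i / x (i + 1)) * (b (i + 1) - p i))
    (hIR : cost (q 0) (ε 0) (b 0) (x 0) (p' 0) ≤ q 0 - ε 0)
    (hIC : ∀ i, i + 1 < K →
      cost (q (i + 1)) (ε (i + 1)) (b (i + 1)) (x (i + 1)) (p' (i + 1)) ≤
        cost (q (i + 1)) (ε (i + 1)) (b (i + 1)) (x i) (p' i)) :
    ∀ i < K, p' i ≤ p i := by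
  intro i
  induction i with
  | zero =>
    intro _
    rw [cost_eq_of_le_knee _ _ _ _ _ (hb0 0 hK) (hb1 0 hK) (hε0 0 hK)
      (hx0 0 hK).le (hxknee 0 hK)] at hIR
    have hx := hx0 0 hK
    rw [hp0]
    nlinarith
  | succ i ih =>
    intro hi1
    have hiK : i < K := Nat.lt_of_succ_lt hi1
    have hpi := ih hiK
    have hx1 : 0 < x (i + 1) := hx0 _ hi1
    have hxi : 0 < x i := hx0 _ hiK
    have hIC' := hIC i hi1
    rw [cost_eq_of_le_knee _ _ _ _ _ (hb0 _ hi1) (hb1 _ hi1) (hε0 _ hi1) hx1.le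
        (hxknee _ hi1),
      cost_eq_of_le_knee _ _ _ _ _ (hb0 _ hi1) (hb1 _ hi1) (hε0 _ hi1) hxi.le
        ((hxmono i hi1).trans (hxknee _ hi1))] at hIC'
    have h2 : x i * p' i ≤ x i * p i := mul_le_mul_of_nonneg_left hpi hxi.le
    rw [hprec i hi1]
    have key : p' (i + 1) * x (i + 1) ≤
        (b (i + 1) - x i / x (i + 1) * (b (i + 1) - p i)) * x (i + 1) := by
      have hq : x i / x (i + 1) * (b (i + 1) - p i) * x (i + 1)
          = x i * (b (i + 1) - p i) := by
        field_simp
      nlinarith [hq]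
    exact le_of_mul_le_mul_right key hx1
end

section
/- Let b_1, …, b_K and x_1, …, x_K be reals with x_i > 0 for all i, let c be a real, and define prices recursively by p_1 = b_1 and p_i = b_i − (x_{i−1}/x_i)·(b_i − p_{i−1}) for i = 2, …, K. Then for every i, x_i·(p_i − c) = x_i·(b_i − c) − Σ_{j=1}^{i−1} x_j·(b_{j+1} − b_j). -/
/-- With prices defined by the recursion p_1 = b_1 and
p_i = b_i − (x_{i−1}/x_i)·(b_i − p_{i−1}), the per-type profit satisfies
x_i·(p_i − c) = x_i·(b_i − c) − Σ_{j<i} x_j·(b_{j+1} − b_j). -/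
theorem stmt18 (K : ℕ) (b x p : ℕ → ℝ) (c : ℝ)
    (hx : ∀ i < K, 0 < x i)
    (hp0 : p 0 = b 0)
    (hprec : ∀ i, i + 1 < K → p (i + 1) = b (i + 1) - (x i / x (i + 1)) * (b (i + 1) - p i)) :
    ∀ i < K, x i * (p i - c) =
      x i * (b i - c) - ∑ j ∈ Finset.range i, x j * (b (j + 1) - b j) := by
  intro i
  induction i with
  | zero => intro _; simp [hp0]
  | succ n ih =>
    intro h
    have hlt : n < K := Nat.lt_of_succ_lt h
    have hih := ih hlt
    have hxn1 : x (n + 1) ≠ 0 := ne_of_gt (hx _ h)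
    rw [hprec n h, Finset.sum_range_succ]
    field_simp
    nlinarith [hih]
end

section
/- Let b_1, …, b_K and x_1, …, x_K be reals with x_i > 0 for all i, let r_1, …, r_K and c be reals, and define prices recursively by p_1 = b_1 and p_i = b_i − (x_{i−1}/x_i)·(b_i − p_{i−1}) for i = 2, …, K. Then the seller's expected profit satisfies Σ_{i=1}^K r_i·x_i·(p_i − c) = Σ_{i=1}^K x_i·( r_i·(b_i − c) − (b_{i+1} − b_i)·Σ_{j=i+1}^K r_j ), where the term with index i = K is x_K·r_K·(b_K − c) (the inner sum Σ_{j=K+1}^K r_j being empty). In particular, the expected profit is a linear function of each x_i whose coefficient r_i·(b_i − c) − (b_{i+1} − b_i)·Σ_{j=i+1}^K r_j does not depend on any x_j. -/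
/-- With prices defined by the recursion p_1 = b_1 and
p_i = b_i − (x_{i−1}/x_i)·(b_i − p_{i−1}), the seller's expected profit equals
Σ_i x_i·(r_i·(b_i − c) − (b_{i+1} − b_i)·Σ_{j>i} r_j), a linear function of each x_i
with coefficients independent of the bandwidths. -/
theorem stmt19 (K : ℕ) (b x r p : ℕ → ℝ) (c : ℝ)
    (hx : ∀ i < K, 0 < x i)
    (hp0 : p 0 = b 0)
    (hprec : ∀ i, i + 1 < K → p (i + 1) = b (i + 1) - (x i / x (i + 1)) * (b (i + 1) - p i)) :
    ∑ i ∈ Finset.range K, r i * x i * (p i - c) =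
      ∑ i ∈ Finset.range K, x i *
        (r i * (b i - c) - (b (i + 1) - b i) * ∑ j ∈ Finset.Ico (i + 1) K, r j) := by
  have hy : ∀ i, i < K → x i * (b i - p i)
      = ∑ k ∈ Finset.range i, x k * (b (k + 1) - b k) := by
    intro i
    induction i with
    | zero => intro _; simp [hp0]
    | succ n ih =>
      intro hn
      have hn' : n < K := Nat.lt_of_succ_lt hn
      have hxne : x (n + 1) ≠ 0 := (hx _ hn).ne'
      rw [hprec n hn, Finset.sum_range_succ, ← ih hn']
      field_simp
      ring
  calc ∑ i ∈ Finset.range K, r i * x i * (p i - c)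
      = ∑ i ∈ Finset.range K,
          (x i * (r i * (b i - c)) - r i * (x i * (b i - p i))) := by
        apply Finset.sum_congr rfl
        intro i hi
        ring
    _ = ∑ i ∈ Finset.range K, (x i * (r i * (b i - c))
          - ∑ k ∈ Finset.range i, r i * (x k * (b (k + 1) - b k))) := by
        apply Finset.sum_congr rfl
        intro i hi
        rw [hy i (Finset.mem_range.mp hi), Finset.mul_sum]
    _ = ∑ i ∈ Finset.range K, x i * (r i * (b i - c))
          - ∑ i ∈ Finset.range K, ∑ k ∈ Finset.range i,
              r i * (x k * (b (k + 1) - b k)) := by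
        rw [Finset.sum_sub_distrib]
    _ = ∑ i ∈ Finset.range K, x i * (r i * (b i - c))
          - ∑ k ∈ Finset.range K, ∑ i ∈ Finset.Ico (k + 1) K,
              r i * (x k * (b (k + 1) - b k)) := by
        congr 1
        simp only [← Nat.Ico_zero_eq_range]
        rw [Finset.sum_Ico_Ico_comm']
    _ = ∑ i ∈ Finset.range K, x i *
          (r i * (b i - c) - (b (i + 1) - b i) * ∑ j ∈ Finset.Ico (i + 1) K, r j) := by
        rw [← Finset.sum_sub_distrib]
        apply Finset.sum_congr rfl
        intro i _
        rw [← Finset.sum_mul]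
        ring
end
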